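/- arXiv:1504.03602 — 3 statements merged into one kernel-verified Lean document; each statement's English description precedes it below -/
import Mathlib

section
/- Let (A,B) be a win-lose bimatrix game whose bipartite graph has minimum out-degree at least one, and let k ≥ 1. If the bipartite graph of the game contains an undominated set of k rows (or, symmetrically, of k columns), then the game has a (1 − 1/k)-well-supported Nash equilibrium in which the supports of both players' strategies have cardinality at most k. -/
open Finset

/-- A win-lose bimatrix game: all payoff entries are 0 or 1. -/
def IsWinLose {m n : ℕ} (A B : Matrix (Fin m) (Fin n) ℝ) : Prop :=
  ∀ i j, (A i j = 0 ∨ A i j = 1) ∧ (B i j = 0 ∨ B i j = 1)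

/-- A mixed strategy: nonnegative entries summing to 1. -/
def IsStrategy {d : ℕ} (p : Fin d → ℝ) : Prop :=
  (∀ i, 0 ≤ p i) ∧ ∑ i, p i = 1

/-- The support of a mixed strategy. -/
noncomputable def strategySupport {d : ℕ} (p : Fin d → ℝ) : Finset (Fin d) :=
  Finset.univ.filter fun i => 0 < p i

/-- (p, q) is an ε-well-supported Nash equilibrium of the game (A, B). -/
def IsWSNE {m n : ℕ} (A B : Matrix (Fin m) (Fin n) ℝ) (ε : ℝ)
    (p : Fin m → ℝ) (q : Fin n → ℝ) : Prop :=
  IsStrategy p ∧ IsStrategy q ∧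
  (∀ i, 0 < p i → ∀ i', ∑ j, A i j * q j ≥ ∑ j, A i' j * q j - ε) ∧
  (∀ j, 0 < q j → ∀ j', ∑ i, p i * B i j ≥ ∑ i, p i * B i j' - ε)

/-- The bipartite graph of the game has minimum out-degree at least one. -/
def MinOutDegOne {m n : ℕ} (A B : Matrix (Fin m) (Fin n) ℝ) : Prop :=
  (∀ i, ∃ j, A i j = 1) ∧ (∀ j, ∃ i, B i j = 1)

/-- The bipartite graph of the game contains a (directed) cycle of length `2 * s`:
distinct rows `ri 0, …, ri (s-1)` and distinct columns `cj 0, …, cj (s-1)` with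
arcs `ri t → cj t` and `cj t → ri (t+1 mod s)`. -/
def HasBipartiteCycle {m n : ℕ} (A B : Matrix (Fin m) (Fin n) ℝ) (s : ℕ) : Prop :=
  ∃ (ri : Fin s → Fin m) (cj : Fin s → Fin n),
    Function.Injective ri ∧ Function.Injective cj ∧
    (∀ t : Fin s, A (ri t) (cj t) = 1) ∧
    (∀ t : Fin s, B (ri ⟨(t.1 + 1) % s, Nat.mod_lt _ t.pos⟩) (cj t) = 1)

/- Let `S` be an undominated set of `k` rows and send every row `i` to a column `f i`
with `A i (f i) = 1`. The row player mixes uniformly over `S`, the column player plays the image of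
that distribution under `f`. Each row of `S` then earns at least `1/k` while no row earns more than
`1`; each column earns at least `0`, and since `S` is undominated, every column loses against some
row of `S` and so earns at most `1 - 1/k`. Undominated sets of columns are
handled by exchanging the roles of the players. -/

section Strategies

variable {d e : ℕ}

@[simp]
lemma mem_strategySupport {p : Fin d → ℝ} {i : Fin d} : i ∈ strategySupport p ↔ 0 < p i := by
  unfold strategySupport
  simp only [mem_filter_univ]

noncomputable def uniformStrategy (S : Finset (Fin d)) : Fin d → ℝ :=
  fun i => if i ∈ S then (#S : ℝ)⁻¹ else 0

def pushforwardStrategy (f : Fin d → Fin e) (p : Fin d → ℝ) : Fin e → ℝ :=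
  fun j => ∑ i with f i = j, p i

lemma uniformStrategy_nonneg (S : Finset (Fin d)) (i : Fin d) : 0 ≤ uniformStrategy S i := by
  unfold uniformStrategy
  split <;> positivity

lemma isStrategy_uniformStrategy {S : Finset (Fin d)} (hS : S.Nonempty) :
    IsStrategy (uniformStrategy S) := by
  refine ⟨uniformStrategy_nonneg S, ?_⟩
  simp only [uniformStrategy, sum_ite_mem, univ_inter, sum_const, nsmul_eq_mul]
  exact mul_inv_cancel₀ (Nat.cast_ne_zero.mpr hS.card_pos.ne')

lemma strategySupport_uniformStrategy (S : Finset (Fin d)) :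
    strategySupport (uniformStrategy S) = S := by
  ext i
  by_cases hi : i ∈ S
  · simpa [uniformStrategy, hi] using card_pos.mpr ⟨i, hi⟩
  · simp [uniformStrategy, hi]

lemma isStrategy_pushforwardStrategy {p : Fin d → ℝ} (hp : IsStrategy p) (f : Fin d → Fin e) :
    IsStrategy (pushforwardStrategy f p) :=
  ⟨fun _ => sum_nonneg fun i _ => hp.1 i, (sum_fiberwise univ f p).trans hp.2⟩

lemma le_pushforwardStrategy {p : Fin d → ℝ} (hp : ∀ i, 0 ≤ p i) (f : Fin d → Fin e) (i : Fin d) :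
    p i ≤ pushforwardStrategy f p (f i) :=
  single_le_sum (fun i' _ => hp i') (mem_filter.mpr ⟨mem_univ i, rfl⟩)

lemma strategySupport_pushforwardStrategy_subset (p : Fin d → ℝ) (f : Fin d → Fin e) :
    strategySupport (pushforwardStrategy f p) ⊆ (strategySupport p).image f := by
  intro j hj
  rw [mem_strategySupport, pushforwardStrategy, ← sum_const_zero] at hj
  obtain ⟨i, hi, hpi⟩ := exists_lt_of_sum_lt hj
  exact mem_image.mpr ⟨i, mem_strategySupport.mpr hpi, (mem_filter.mp hi).2⟩

end Strategies

section Payoffs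

variable {d : ℕ}

lemma payoff_le_one {a q : Fin d → ℝ} (ha : ∀ j, a j ≤ 1) (hq : IsStrategy q) :
    ∑ j, a j * q j ≤ 1 :=
  calc ∑ j, a j * q j ≤ ∑ j, q j :=
        sum_le_sum fun j _ => mul_le_of_le_one_left (hq.1 j) (ha j)
    _ = 1 := hq.2

lemma le_payoff_of_eq_one {a q : Fin d → ℝ} (ha : ∀ j, 0 ≤ a j) (hq : ∀ j, 0 ≤ q j) {j₀ : Fin d}
    (hj₀ : a j₀ = 1) : q j₀ ≤ ∑ j, a j * q j := by
  simpa [hj₀] using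
    single_le_sum (f := fun j => a j * q j) (fun j _ => mul_nonneg (ha j) (hq j)) (mem_univ j₀)

lemma payoff_uniformStrategy_le {S : Finset (Fin d)} {b : Fin d → ℝ} (hb : ∀ i, b i ≤ 1)
    {i₀ : Fin d} (hi₀ : i₀ ∈ S) (hb₀ : b i₀ = 0) :
    ∑ i, uniformStrategy S i * b i ≤ 1 - 1 / #S := by
  have hS : (0 : ℝ) < #S := Nat.cast_pos.mpr (card_pos.mpr ⟨i₀, hi₀⟩)
  have hsum : ∑ i ∈ S, b i ≤ #S - 1 :=
    calc ∑ i ∈ S, b i = ∑ i ∈ S.erase i₀, b i := by rw [← sum_erase_add S b hi₀, hb₀, add_zero]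
      _ ≤ #(S.erase i₀) := by simpa using sum_le_sum fun i (_ : i ∈ S.erase i₀) => hb i
      _ = #S - 1 := by rw [card_erase_of_mem hi₀, Nat.cast_pred (card_pos.mpr ⟨i₀, hi₀⟩)]
  calc ∑ i, uniformStrategy S i * b i = (∑ i ∈ S, b i) / #S := by
        simp only [uniformStrategy, ite_mul, zero_mul, sum_ite_mem, univ_inter, ← mul_sum]
        rw [inv_mul_eq_div]
    _ ≤ (#S - 1) / #S := div_le_div_of_nonneg_right hsum hS.le
    _ = 1 - 1 / #S := by field_simp

end Payoffs

section Games

open scoped Matrix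

variable {m n : ℕ} {A B : Matrix (Fin m) (Fin n) ℝ}

lemma IsWinLose.transpose (h : IsWinLose A B) : IsWinLose Bᵀ Aᵀ :=
  fun j i => (h i j).symm

lemma IsWSNE.of_transpose {ε : ℝ} {p : Fin m → ℝ} {q : Fin n → ℝ} (h : IsWSNE Bᵀ Aᵀ ε q p) :
    IsWSNE A B ε p q := by
  obtain ⟨hq, hp, hcol, hrow⟩ := h
  refine ⟨hp, hq, fun i hi i' => ?_, fun j hj j' => ?_⟩
  · simpa only [Matrix.transpose_apply, mul_comm] using hrow i hi i'
  · simpa only [Matrix.transpose_apply, mul_comm] using hcol j hj j'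

theorem isWSNE_uniformStrategy_pushforwardStrategy (hWL : IsWinLose A B) {S : Finset (Fin m)}
    (hS : S.Nonempty) (hund : ¬ ∃ j, ∀ i ∈ S, B i j = 1) {f : Fin m → Fin n}
    (hf : ∀ i, A i (f i) = 1) :
    IsWSNE A B (1 - 1 / #S) (uniformStrategy S)
      (pushforwardStrategy f (uniformStrategy S)) := by
  set p := uniformStrategy S
  set q := pushforwardStrategy f p
  have hp : IsStrategy p := isStrategy_uniformStrategy hS
  have hq : IsStrategy q := isStrategy_pushforwardStrategy hp f
  have hA : ∀ i j, 0 ≤ A i j ∧ A i j ≤ 1 := fun i j => by rcases (hWL i j).1 with h | h <;> simp [h]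
  have hB : ∀ i j, 0 ≤ B i j ∧ B i j ≤ 1 := fun i j => by rcases (hWL i j).2 with h | h <;> simp [h]
  refine ⟨hp, hq, fun i hi i' => ?_, fun j _ j' => ?_⟩
  · have hiS : i ∈ S := by rwa [← strategySupport_uniformStrategy S, mem_strategySupport]
    have hpi : p i = 1 / #S := by simp [p, uniformStrategy, hiS]
    have hlow : p i ≤ ∑ j, A i j * q j :=
      (le_pushforwardStrategy hp.1 f i).trans
        (le_payoff_of_eq_one (fun j => (hA i j).1) hq.1 (hf i))
    have hup := payoff_le_one (fun j => (hA i' j).2) hq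
    linarith
  · obtain ⟨i₀, hi₀, hne⟩ : ∃ i₀ ∈ S, B i₀ j' ≠ 1 := by simpa using not_exists.mp hund j'
    have hup : ∑ i, p i * B i j' ≤ 1 - 1 / #S :=
      payoff_uniformStrategy_le (fun i => (hB i j').2) hi₀ ((hWL i₀ j').2.resolve_right hne)
    have hlow : 0 ≤ ∑ i, p i * B i j := sum_nonneg fun i _ => mul_nonneg (hp.1 i) (hB i j).1
    linarith

theorem exists_isWSNE_of_undominated_rows (hWL : IsWinLose A B) (hdeg : ∀ i, ∃ j, A i j = 1)
    {S : Finset (Fin m)} (hS : S.Nonempty) (hund : ¬ ∃ j, ∀ i ∈ S, B i j = 1) :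
    ∃ (p : Fin m → ℝ) (q : Fin n → ℝ), IsWSNE A B (1 - 1 / #S) p q ∧
      #(strategySupport p) ≤ #S ∧ #(strategySupport q) ≤ #S := by
  choose f hf using hdeg
  refine ⟨_, _, isWSNE_uniformStrategy_pushforwardStrategy hWL hS hund hf,
    (congrArg card (strategySupport_uniformStrategy S)).le, ?_⟩
  calc #(strategySupport (pushforwardStrategy f (uniformStrategy S)))
      ≤ #((strategySupport (uniformStrategy S)).image f) :=
        card_le_card (strategySupport_pushforwardStrategy_subset _ f)
    _ ≤ #S := card_image_le.trans (congrArg card (strategySupport_uniformStrategy S)).le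

end Games

/-- Lemma 1 (undominated set ⇒ small-support WSNE). -/
theorem undominated_set_gives_WSNE {m n k : ℕ} (hk : 1 ≤ k)
    (A B : Matrix (Fin m) (Fin n) ℝ)
    (hWL : IsWinLose A B) (hdeg : MinOutDegOne A B)
    (hund : (∃ S : Finset (Fin m), S.card = k ∧ ¬ ∃ j, ∀ i ∈ S, B i j = 1) ∨
            (∃ T : Finset (Fin n), T.card = k ∧ ¬ ∃ i, ∀ j ∈ T, A i j = 1)) :
    ∃ (p : Fin m → ℝ) (q : Fin n → ℝ),
      IsWSNE A B (1 - 1 / (k : ℝ)) p q ∧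
      (strategySupport p).card ≤ k ∧ (strategySupport q).card ≤ k := by
  rcases hund with ⟨S, rfl, hS⟩ | ⟨T, rfl, hT⟩
  · exact exists_isWSNE_of_undominated_rows hWL hdeg.1 (card_pos.mp hk) hS
  · obtain ⟨q, p, hqp, hq, hp⟩ :=
      exists_isWSNE_of_undominated_rows (IsWinLose.transpose hWL) hdeg.2 (card_pos.mp hk) hT
    exact ⟨p, q, IsWSNE.of_transpose hqp, hp, hq⟩
end

section
/- Let (A,B) be a win-lose bimatrix game and let k ≥ 1. If the bipartite graph of the game contains a (directed) cycle of length 2k, then the game has a (1 − 1/k)-well-supported Nash equilibrium in which the supports of both players' strategies have cardinality at most k. -/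
open Finset

section UniformStrategy

variable {d : ℕ} (s : Finset (Fin d))

-- For empty `s` this is identically zero, hence not a strategy.
noncomputable def uniformOn : Fin d → ℝ :=
  fun i => if i ∈ s then (#s : ℝ)⁻¹ else 0

variable {s}

theorem uniformOn_of_mem {i : Fin d} (hi : i ∈ s) : uniformOn s i = (#s : ℝ)⁻¹ :=
  if_pos hi

theorem uniformOn_nonneg (i : Fin d) : 0 ≤ uniformOn s i := by
  unfold uniformOn
  split <;> positivity

theorem isStrategy_uniformOn (hs : s.Nonempty) : IsStrategy (uniformOn s) := by
  refine ⟨uniformOn_nonneg, ?_⟩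
  have hcard : (#s : ℝ) ≠ 0 := by exact_mod_cast hs.card_pos.ne'
  simp only [uniformOn, sum_ite_mem, univ_inter, sum_const, nsmul_eq_mul]
  exact mul_inv_cancel₀ hcard

theorem strategySupport_uniformOn : strategySupport (uniformOn s) = s := by
  ext i
  rw [strategySupport, mem_filter]
  by_cases hi : i ∈ s
  · have : 0 < #s := card_pos.mpr ⟨i, hi⟩
    simp [uniformOn, hi, this]
  · simp [uniformOn, hi]

theorem mem_of_uniformOn_pos {i : Fin d} (hi : 0 < uniformOn s i) : i ∈ s := by
  rw [← strategySupport_uniformOn (s := s)]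
  simpa [strategySupport, mem_filter] using hi

theorem inv_card_le_sum_mul_uniformOn {a : Fin d → ℝ} (ha : ∀ j, 0 ≤ a j) {j₀ : Fin d}
    (hj₀ : j₀ ∈ s) (ha₀ : a j₀ = 1) : (#s : ℝ)⁻¹ ≤ ∑ j, a j * uniformOn s j :=
  calc (#s : ℝ)⁻¹ = a j₀ * uniformOn s j₀ := by rw [ha₀, uniformOn_of_mem hj₀, one_mul]
    _ ≤ ∑ j, a j * uniformOn s j :=
      single_le_sum (fun j _ => mul_nonneg (ha j) (uniformOn_nonneg j)) (mem_univ j₀)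

end UniformStrategy

theorem IsStrategy.sum_mul_le_one {d : ℕ} {q : Fin d → ℝ} (hq : IsStrategy q) {a : Fin d → ℝ}
    (ha : ∀ j, a j ≤ 1) : ∑ j, a j * q j ≤ 1 :=
  calc ∑ j, a j * q j ≤ ∑ j, q j :=
        sum_le_sum fun j _ => mul_le_of_le_one_left (hq.1 j) (ha j)
    _ = 1 := hq.2

-- No deviation can earn more than `1`.
theorem isWSNE_one_sub_of_le_payoff {m n : ℕ} {A B : Matrix (Fin m) (Fin n) ℝ}
    {p : Fin m → ℝ} {q : Fin n → ℝ} {δ : ℝ} (hA : ∀ i j, A i j ≤ 1) (hB : ∀ i j, B i j ≤ 1)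
    (hp : IsStrategy p) (hq : IsStrategy q)
    (hrow : ∀ i, 0 < p i → δ ≤ ∑ j, A i j * q j)
    (hcol : ∀ j, 0 < q j → δ ≤ ∑ i, p i * B i j) :
    IsWSNE A B (1 - δ) p q := by
  refine ⟨hp, hq, fun i hi i' => ?_, fun j hj j' => ?_⟩
  · have := hq.sum_mul_le_one (hA i')
    linarith [hrow i hi]
  · have := hp.sum_mul_le_one (fun i => hB i j')
    simp only [mul_comm (B _ _)] at this
    linarith [hcol j hj]

theorem IsWinLose.nonneg_left {m n : ℕ} {A B : Matrix (Fin m) (Fin n) ℝ} (h : IsWinLose A B)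
    (i : Fin m) (j : Fin n) : 0 ≤ A i j := by
  rcases (h i j).1 with h | h <;> simp [h]

theorem IsWinLose.nonneg_right {m n : ℕ} {A B : Matrix (Fin m) (Fin n) ℝ} (h : IsWinLose A B)
    (i : Fin m) (j : Fin n) : 0 ≤ B i j := by
  rcases (h i j).2 with h | h <;> simp [h]

theorem IsWinLose.le_one_left {m n : ℕ} {A B : Matrix (Fin m) (Fin n) ℝ} (h : IsWinLose A B)
    (i : Fin m) (j : Fin n) : A i j ≤ 1 := by
  rcases (h i j).1 with h | h <;> simp [h]

theorem IsWinLose.le_one_right {m n : ℕ} {A B : Matrix (Fin m) (Fin n) ℝ} (h : IsWinLose A B)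
    (i : Fin m) (j : Fin n) : B i j ≤ 1 := by
  rcases (h i j).2 with h | h <;> simp [h]

/- Play uniformly on the rows and on the columns of the cycle: every row of the cycle wins against
its successor column, and every column against its successor row, with probability `1/k`. -/
/-- Lemma 2 (a cycle of length 2k ⇒ small-support (1-1/k)-WSNE). -/
theorem cycle_gives_WSNE {m n k : ℕ} (hk : 1 ≤ k)
    (A B : Matrix (Fin m) (Fin n) ℝ)
    (hWL : IsWinLose A B)
    (hcyc : HasBipartiteCycle A B k) :
    ∃ (p : Fin m → ℝ) (q : Fin n → ℝ),
      IsWSNE A B (1 - 1 / (k : ℝ)) p q ∧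
      (strategySupport p).card ≤ k ∧ (strategySupport q).card ≤ k := by
  obtain ⟨ri, cj, hri, hcj, hA, hB⟩ := hcyc
  set rows := univ.image ri
  set cols := univ.image cj
  have hrows : #rows = k := by simp [rows, card_image_of_injective _ hri]
  have hcols : #cols = k := by simp [cols, card_image_of_injective _ hcj]
  refine ⟨uniformOn rows, uniformOn cols, ?_, by rw [strategySupport_uniformOn, hrows],
    by rw [strategySupport_uniformOn, hcols]⟩
  rw [one_div]
  refine isWSNE_one_sub_of_le_payoff hWL.le_one_left hWL.le_one_right
    (isStrategy_uniformOn (card_pos.mp (hrows ▸ hk)))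
    (isStrategy_uniformOn (card_pos.mp (hcols ▸ hk))) ?_ ?_
  · intro i hi
    obtain ⟨t, -, rfl⟩ := mem_image.mp (mem_of_uniformOn_pos hi)
    rw [← hcols]
    exact inv_card_le_sum_mul_uniformOn (hWL.nonneg_left _)
      (mem_image_of_mem cj (mem_univ t)) (hA t)
  · intro j hj
    obtain ⟨t, -, rfl⟩ := mem_image.mp (mem_of_uniformOn_pos hj)
    rw [← hrows]
    simp only [mul_comm (uniformOn rows _)]
    exact inv_card_le_sum_mul_uniformOn (fun i => hWL.nonneg_right i _)
      (mem_image_of_mem ri (mem_univ _)) (hB t)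
end

section
/- Every bimatrix game (A,B) with all payoff entries in the interval [0,1] has a (1/2)-approximate Nash equilibrium (p,q) in which the support of p has cardinality at most 2 and the support of q has cardinality at most 1. -/
open Finset

def IsApproxNE {m n : ℕ} (A B : Matrix (Fin m) (Fin n) ℝ) (ε : ℝ)
    (p : Fin m → ℝ) (q : Fin n → ℝ) : Prop :=
  IsStrategy p ∧ IsStrategy q ∧
  (∀ i', ∑ i, ∑ j, p i * A i j * q j ≥ (∑ j, A i' j * q j) - ε) ∧
  (∀ j', ∑ i, ∑ j, p i * B i j * q j ≥ (∑ i, p i * B i j') - ε)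

section Strategies

variable {d : ℕ}

noncomputable def pureStrategy (k : Fin d) : Fin d → ℝ := Pi.single k 1

theorem isStrategy_pureStrategy (k : Fin d) : IsStrategy (pureStrategy k) :=
  ⟨fun i => (Pi.single_nonneg.2 zero_le_one : 0 ≤ pureStrategy k) i, by simp [pureStrategy]⟩

theorem strategySupport_pureStrategy (k : Fin d) : strategySupport (pureStrategy k) = {k} := by
  ext i
  by_cases h : i = k <;> simp [strategySupport, pureStrategy, Pi.single_apply, h]

theorem sum_mul_pureStrategy (f : Fin d → ℝ) (k : Fin d) :
    ∑ j, f j * pureStrategy k j = f k := by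
  simp [pureStrategy, Pi.single_apply]

theorem sum_pureStrategy_mul (k : Fin d) (f : Fin d → ℝ) :
    ∑ i, pureStrategy k i * f i = f k := by
  simp [pureStrategy, Pi.single_apply]

theorem IsStrategy.midpoint {p q : Fin d → ℝ} (hp : IsStrategy p) (hq : IsStrategy q) :
    IsStrategy fun i => (p i + q i) / 2 := by
  refine ⟨fun i => by linarith [hp.1 i, hq.1 i], ?_⟩
  rw [← sum_div, sum_add_distrib, hp.2, hq.2]
  norm_num

theorem strategySupport_midpoint {p q : Fin d → ℝ} (hp : ∀ i, 0 ≤ p i) (hq : ∀ i, 0 ≤ q i) :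
    strategySupport (fun i => (p i + q i) / 2) = strategySupport p ∪ strategySupport q := by
  ext i
  simp only [strategySupport, mem_union, mem_filter, mem_univ, true_and]
  constructor
  · intro h
    by_contra! hc
    linarith [hc.1, hc.2]
  · rintro (h | h) <;> linarith [hp i, hq i]

theorem sum_midpoint_mul (p q f : Fin d → ℝ) :
    ∑ i, (p i + q i) / 2 * f i = (∑ i, p i * f i + ∑ i, q i * f i) / 2 := by
  rw [← sum_add_distrib, sum_div]
  exact sum_congr rfl fun i _ => by ring

end Strategies

/-- Daskalakis–Mehta–Papadimitriou: the row player already earns half of the best payoff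
against `j`; the column player earns half of the best payoff against `i₁`, and a deviation
gains at most `1/2` on the other half `i₂`. -/
theorem isApproxNE_half_of_bestResponses {m n : ℕ} {A B : Matrix (Fin m) (Fin n) ℝ}
    (hA : ∀ i j, A i j ∈ Set.Icc (0 : ℝ) 1) (hB : ∀ i j, B i j ∈ Set.Icc (0 : ℝ) 1)
    {i₁ i₂ : Fin m} {j : Fin n} (hj : ∀ j', B i₁ j' ≤ B i₁ j) (hi₂ : ∀ i', A i' j ≤ A i₂ j) :
    IsApproxNE A B (1 / 2) (fun i => (pureStrategy i₁ i + pureStrategy i₂ i) / 2)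
      (pureStrategy j) := by
  refine ⟨(isStrategy_pureStrategy i₁).midpoint (isStrategy_pureStrategy i₂),
    isStrategy_pureStrategy j, fun i' => ?_, fun j' => ?_⟩ <;>
  simp only [sum_mul_pureStrategy, sum_midpoint_mul, sum_pureStrategy_mul]
  · linarith [(hA i₁ j).1, (hA i' j).2, hi₂ i']
  · linarith [(hB i₂ j).1, (hB i₂ j').2, hj j']

/-- Every bimatrix game with payoffs in [0,1] has a (1/2)-approximate Nash
equilibrium with row support of size at most 2 and column support of size 1. -/
theorem half_NE_small_support (m n : ℕ) (hm : 1 ≤ m) (hn : 1 ≤ n)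
    (A B : Matrix (Fin m) (Fin n) ℝ)
    (hA : ∀ i j, A i j ∈ Set.Icc (0 : ℝ) 1) (hB : ∀ i j, B i j ∈ Set.Icc (0 : ℝ) 1) :
    ∃ (p : Fin m → ℝ) (q : Fin n → ℝ), IsStrategy p ∧ IsStrategy q ∧
      (∀ i', ∑ i, ∑ j, p i * A i j * q j ≥ (∑ j, A i' j * q j) - 1 / 2) ∧
      (∀ j', ∑ i, ∑ j, p i * B i j * q j ≥ (∑ i, p i * B i j') - 1 / 2) ∧
      (strategySupport p).card ≤ 2 ∧ (strategySupport q).card ≤ 1 := by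
  let i₁ : Fin m := ⟨0, hm⟩
  obtain ⟨j, -, hj⟩ := exists_max_image univ (B i₁) ⟨⟨0, hn⟩, mem_univ _⟩
  obtain ⟨i₂, -, hi₂⟩ := exists_max_image univ (fun i => A i j) ⟨i₁, mem_univ _⟩
  obtain ⟨hp, hq, hrow, hcol⟩ :=
    isApproxNE_half_of_bestResponses hA hB (fun j' => hj j' (mem_univ _))
      (fun i' => hi₂ i' (mem_univ _))
  refine ⟨_, _, hp, hq, hrow, hcol, ?_, by simp [strategySupport_pureStrategy]⟩
  rw [strategySupport_midpoint (isStrategy_pureStrategy i₁).1 (isStrategy_pureStrategy i₂).1,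
    strategySupport_pureStrategy, strategySupport_pureStrategy]
  exact card_union_le _ _
end
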